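/- arXiv:2109.04011 — 4 statements merged into one kernel-verified Lean document; each statement's English description precedes it below -/
import Mathlib

section
/- Let p be a prime, n ≥ 1, and consider the fusion ring with basis {g : g ∈ (ℤ/pℤ)^{2n}} ∪ {x_h : h ∈ (ℤ/pℤ)^×} with multiplication g·g' = g+g', g·x_h = x_h, x_g·x_h = p^n x_{gh} when gh ≠ 1, and x_g·x_{g^{-1}} = Σ_{h ∈ (ℤ/pℤ)^{2n}} h. Then the Frobenius–Perron dimension of x_h is p^n for every h, and the total Frobenius–Perron dimension of the ring is p^{2n+1}. -/
/-- Basis of the fusion ring of the character ring of an extraspecial `p`-group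
`p^{1+2n}_±`: group-like elements `g ∈ (ℤ/pℤ)^{2n}` and the noninvertible
elements `x_h`, `h ∈ (ℤ/pℤ)ˣ`. -/
abbrev ESBasis (p n : ℕ) : Type := (Fin (2 * n) → ZMod p) ⊕ (ZMod p)ˣ

/-- Structure constants of the fusion ring with `g·g' = g+g'`, `g·x_h = x_h`,
`x_g·x_h = pⁿ x_{gh}` when `gh ≠ 1`, and `x_g·x_{g⁻¹} = Σ_h h`. -/
def ESmul (p n : ℕ) : ESBasis p n → ESBasis p n → ESBasis p n → ℕ
  | .inl g, .inl g', .inl h => if h = g + g' then 1 else 0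
  | .inl _, .inl _, .inr _ => 0
  | .inl _, .inr h, c => if c = .inr h then 1 else 0
  | .inr h, .inl _, c => if c = .inr h then 1 else 0
  | .inr g, .inr h, .inr c => if g * h ≠ 1 ∧ c = g * h then p ^ n else 0
  | .inr g, .inr h, .inl _ => if g * h = 1 then 1 else 0

/-!
Multiplying by `x_1` shows that every group-like element has dimension `1`, and then
`x_1 · x_1 = Σ_h h` gives `d(x_1)² = p^{2n}`. The relations `x_g · x_h = pⁿ x_{gh}` and
`x_g · x_{g⁻¹} = Σ_h h` say precisely that `h ↦ d(x_h) / pⁿ` is a homomorphism from the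
finite group `(ℤ/pℤ)ˣ` to the positive reals, which must be trivial.
-/

/-- `d` extends linearly to a ring homomorphism from the fusion ring to `ℝ`. -/
def IsESCharacter (p n : ℕ) [NeZero p] (d : ESBasis p n → ℝ) : Prop :=
  ∀ a b : ESBasis p n, d a * d b = ∑ c : ESBasis p n, (ESmul p n a b c : ℝ) * d c

theorem MonoidHom.eq_one_of_pos {G : Type*} [Group G] [Finite G] (f : G →* ℝ)
    (hf : ∀ g, 0 < f g) (g : G) : f g = 1 := by
  have h := congrArg f (pow_orderOf_eq_one g)
  rw [map_pow, map_one] at h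
  exact (pow_eq_one_iff_of_nonneg (hf g).le (orderOf_pos g).ne').mp h

theorem cast_pow_pos_of_neZero {p : ℕ} [NeZero p] (n : ℕ) : (0 : ℝ) < (p : ℝ) ^ n :=
  pow_pos (Nat.cast_pos.mpr (NeZero.pos p)) n

namespace IsESCharacter

variable {p n : ℕ} [NeZero p] {d : ESBasis p n → ℝ}

theorem inl_eq_one (hd : IsESCharacter p n d) (hpos : ∀ b, 0 < d b)
    (g : Fin (2 * n) → ZMod p) : d (.inl g) = 1 := by
  have h := hd (.inl g) (.inr 1)
  simp only [ESmul, Nat.cast_ite, Nat.cast_one, CharP.cast_eq_zero, ite_mul, one_mul, zero_mul,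
    Finset.sum_ite_eq', Finset.mem_univ, ↓reduceIte] at h
  exact (mul_eq_right₀ (hpos _).ne').mp h

theorem inr_mul_inr_of_mul_ne_one (hd : IsESCharacter p n d) {g h : (ZMod p)ˣ}
    (hgh : g * h ≠ 1) : d (.inr g) * d (.inr h) = (p : ℝ) ^ n * d (.inr (g * h)) := by
  rw [hd, Fintype.sum_sum_type]
  simp [ESmul, hgh, Finset.sum_ite_eq']

theorem inr_mul_inr_inv (hd : IsESCharacter p n d) (hpos : ∀ b, 0 < d b) (g : (ZMod p)ˣ) :
    d (.inr g) * d (.inr g⁻¹) = (p : ℝ) ^ (2 * n) := by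
  rw [hd, Fintype.sum_sum_type]
  simp [ESmul, hd.inl_eq_one hpos, ZMod.card]

theorem inr_one (hd : IsESCharacter p n d) (hpos : ∀ b, 0 < d b) :
    d (.inr 1) = (p : ℝ) ^ n := by
  have h := hd.inr_mul_inr_inv hpos 1
  rw [inv_one, ← sq, pow_mul', sq_eq_sq₀ (hpos _).le (cast_pow_pos_of_neZero n).le] at h
  exact h

theorem inr_mul_inr (hd : IsESCharacter p n d) (hpos : ∀ b, 0 < d b) (g h : (ZMod p)ˣ) :
    d (.inr g) * d (.inr h) = (p : ℝ) ^ n * d (.inr (g * h)) := by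
  by_cases hgh : g * h = 1
  · rw [eq_inv_of_mul_eq_one_right hgh, hd.inr_mul_inr_inv hpos, mul_inv_cancel,
      hd.inr_one hpos, ← pow_add, two_mul]
  · exact hd.inr_mul_inr_of_mul_ne_one hgh

noncomputable def normalizedDim (hd : IsESCharacter p n d) (hpos : ∀ b, 0 < d b) :
    (ZMod p)ˣ →* ℝ where
  toFun h := d (.inr h) / (p : ℝ) ^ n
  map_one' := by rw [hd.inr_one hpos, div_self (cast_pow_pos_of_neZero n).ne']
  map_mul' g h := by
    rw [div_mul_div_comm, hd.inr_mul_inr hpos,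
      mul_div_mul_left _ _ (cast_pow_pos_of_neZero n).ne']

theorem inr_eq (hd : IsESCharacter p n d) (hpos : ∀ b, 0 < d b) (h : (ZMod p)ˣ) :
    d (.inr h) = (p : ℝ) ^ n :=
  (div_eq_one_iff_eq (cast_pow_pos_of_neZero n).ne').mp <|
    (hd.normalizedDim hpos).eq_one_of_pos
      (fun _ => div_pos (hpos _) (cast_pow_pos_of_neZero n)) h

end IsESCharacter

theorem stmt3_general (p n : ℕ) (hp : p.Prime) [NeZero p]
    (d : ESBasis p n → ℝ) (hpos : ∀ b, 0 < d b)
    (hmul : ∀ a b : ESBasis p n,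
      d a * d b = ∑ c : ESBasis p n, (ESmul p n a b c : ℝ) * d c) :
    (∀ h : (ZMod p)ˣ, d (.inr h) = (p : ℝ) ^ n) ∧
    (∑ b : ESBasis p n, d b ^ 2) = (p : ℝ) ^ (2 * n + 1) := by
  have hd : IsESCharacter p n d := hmul
  refine ⟨hd.inr_eq hpos, ?_⟩
  have : Fact p.Prime := ⟨hp⟩
  simp only [Fintype.sum_sum_type, hd.inl_eq_one hpos, hd.inr_eq hpos, Finset.sum_const,
    Finset.card_univ, Fintype.card_fun, ZMod.card, Fintype.card_fin, ZMod.card_units,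
    nsmul_eq_mul, one_pow, mul_one, Nat.cast_pow, Nat.cast_sub hp.one_le, Nat.cast_one]
  ring

/-- in the fusion ring of the character ring of an extraspecial
`p`-group, the Frobenius–Perron dimension of each `x_h` is `pⁿ`, and the total
Frobenius–Perron dimension is `p^(2n+1)`.  (FPdim is characterized as the unique
assignment of positive reals to the basis which is multiplicative with respect
to the structure constants.) -/
theorem stmt3 (p n : ℕ) (hp : p.Prime) [NeZero p] (hn : 1 ≤ n)
    (d : ESBasis p n → ℝ) (hpos : ∀ b, 0 < d b)
    (hmul : ∀ a b : ESBasis p n,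
      d a * d b = ∑ c : ESBasis p n, (ESmul p n a b c : ℝ) * d c) :
    (∀ h : (ZMod p)ˣ, d (.inr h) = (p : ℝ) ^ n) ∧
    (∑ b : ESBasis p n, d b ^ 2) = (p : ℝ) ^ (2 * n + 1) :=
  stmt3_general p n hp d hpos hmul
end

section
/- With S the 11×11 matrix of the previous context and dimensions d = (1,1,1,1,2,2,2,2,2,2,2), the Verlinde numbers N_{y,z}^w = (1/32)·Σ_x S_{x,y}S_{x,z}\overline{S_{x,w}}/d_x are nonnegative integers for all y,z,w. -/
/-!
Every dimension `d_x = S_{x,0}` is `1` or `2`, so `1 / d_x = (3 - d_x) / 2` and the Verlinde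
number becomes `1/64` times a polynomial in the entries of `S`. These entries lie in `ℤ[√2]`,
where the polynomial can be evaluated exactly: for all `1331` triples it is `64` times a natural
number. The embedding `ℤ[√2] → ℝ` carries this back to `ℝ`.
-/

open Matrix

/-- The `S`-matrix of equation (4) with signs `ε₁ = ε₂ = ε₃ = 1`. -/
noncomputable def Smat : Matrix (Fin 11) (Fin 11) ℝ :=
  let r : ℝ := 2 * Real.sqrt 2
  !![1, 1, 1, 1, 2,  2,  2,  2,  2,  2,  2;
     1, 1, 1, 1, 2,  2,  2, -2, -2, -2, -2;
     1, 1, 1, 1, 2, -2, -2,  2,  2, -2, -2;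
     1, 1, 1, 1, 2, -2, -2, -2, -2,  2,  2;
     2, 2, 2, 2, -4, 0,  0,  0,  0,  0,  0;
     2, 2, -2, -2, 0, r, -r, 0, 0, 0, 0;
     2, 2, -2, -2, 0, -r, r, 0, 0, 0, 0;
     2, -2, 2, -2, 0, 0, 0, r, -r, 0, 0;
     2, -2, 2, -2, 0, 0, 0, -r, r, 0, 0;
     2, -2, -2, 2, 0, 0, 0, 0, 0, r, -r;
     2, -2, -2, 2, 0, 0, 0, 0, 0, -r, r]

/-- `Smat` with `2√2` replaced by an arbitrary `r`, so that it also makes sense in `ℤ√2`. -/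
def sMatrix {R : Type*} [Ring R] (r : R) : Matrix (Fin 11) (Fin 11) R :=
  !![1, 1, 1, 1, 2,  2,  2,  2,  2,  2,  2;
     1, 1, 1, 1, 2,  2,  2, -2, -2, -2, -2;
     1, 1, 1, 1, 2, -2, -2,  2,  2, -2, -2;
     1, 1, 1, 1, 2, -2, -2, -2, -2,  2,  2;
     2, 2, 2, 2, -4, 0,  0,  0,  0,  0,  0;
     2, 2, -2, -2, 0, r, -r, 0, 0, 0, 0;
     2, 2, -2, -2, 0, -r, r, 0, 0, 0, 0;
     2, -2, 2, -2, 0, 0, 0, r, -r, 0, 0;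
     2, -2, 2, -2, 0, 0, 0, -r, r, 0, 0;
     2, -2, -2, 2, 0, 0, 0, 0, 0, r, -r;
     2, -2, -2, 2, 0, 0, 0, 0, 0, -r, r]

theorem Smat_eq_sMatrix : Smat = sMatrix (2 * Real.sqrt 2) := rfl

section Ring

variable {R : Type*} [Ring R]

theorem sMatrix_map {S : Type*} [Ring S] (f : R →+* S) (r : R) :
    (sMatrix r).map f = sMatrix (f r) := by
  ext i j
  fin_cases i <;> fin_cases j <;> simp [sMatrix, map_ofNat]

theorem sMatrix_zero_mul_three_sub (r : R) (x : Fin 11) :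
    sMatrix r x 0 * (3 - sMatrix r x 0) = 2 := by
  fin_cases x <;> norm_num [sMatrix]

/-- `64` times the Verlinde number `N_{y,z}^w`, written without division. -/
def verlindeSum (r : R) (y z w : Fin 11) : R :=
  ∑ x, sMatrix r x y * sMatrix r x z * sMatrix r x w * (3 - sMatrix r x 0)

theorem map_verlindeSum {S : Type*} [Ring S] (f : R →+* S) (r : R) (y z w : Fin 11) :
    f (verlindeSum r y z w) = verlindeSum (f r) y z w := by
  have hentry (i j : Fin 11) : f (sMatrix r i j) = sMatrix (f r) i j := by
    rw [← sMatrix_map f r, map_apply]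
  simp only [verlindeSum, map_sum, map_mul, map_sub, map_ofNat, hentry]

end Ring

theorem one_div_thirtyTwo_mul_sum_div_eq_verlindeSum {K : Type*} [Field K] [NeZero (2 : K)]
    (r : K) (y z w : Fin 11) :
    (1 / 32 : K) * ∑ x, sMatrix r x y * sMatrix r x z * sMatrix r x w / sMatrix r x 0
      = verlindeSum r y z w / 64 := by
  have hdiv (x : Fin 11) : sMatrix r x y * sMatrix r x z * sMatrix r x w / sMatrix r x 0
      = sMatrix r x y * sMatrix r x z * sMatrix r x w * (3 - sMatrix r x 0) / 2 := by
    have hd := sMatrix_zero_mul_three_sub r x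
    have hd0 : sMatrix r x 0 ≠ 0 := left_ne_zero_of_mul (hd ▸ two_ne_zero)
    rw [div_eq_div_iff hd0 two_ne_zero]
    linear_combination (-(sMatrix r x y * sMatrix r x z * sMatrix r x w)) * hd
  rw [Finset.sum_congr rfl fun x _ => hdiv x, ← Finset.sum_div, one_div_mul_eq_div, div_div,
    verlindeSum]
  norm_num

def twoSqrtTwo : ℤ√2 := ⟨0, 2⟩

theorem toReal_twoSqrtTwo : Zsqrtd.toReal (by norm_num) twoSqrtTwo = 2 * Real.sqrt 2 := by
  simp [twoSqrtTwo, Zsqrtd.toReal_apply]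

theorem exists_verlindeSum_twoSqrtTwo_eq (y z w : Fin 11) :
    ∃ m : ℕ, verlindeSum twoSqrtTwo y z w = 64 * m := by
  have h : ∀ y z w : Fin 11, verlindeSum twoSqrtTwo y z w
      = 64 * (((verlindeSum twoSqrtTwo y z w).re / 64).toNat : ℤ√2) := by
    decide
  exact ⟨_, h y z w⟩

/-- with `S` the matrix of equation (4) (signs `ε₁ = ε₂ = ε₃ = 1`)
and dimensions `d_x = S_{x,0}` given by the first column, the Verlinde numbers
`N_{y,z}^w = (1/32)·Σ_x S_{x,y} S_{x,z} S_{x,w} / d_x` are nonnegative integers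
(the matrix is real, so no conjugation is needed). -/
theorem stmt13 :
    ∀ y z w : Fin 11, ∃ m : ℕ,
      (1 / 32 : ℝ) * ∑ x : Fin 11, Smat x y * Smat x z * Smat x w / Smat x 0
        = (m : ℝ) := by
  intro y z w
  obtain ⟨m, hm⟩ := exists_verlindeSum_twoSqrtTwo_eq y z w
  have hm_real := congrArg (Zsqrtd.toReal (d := 2) (by norm_num)) hm
  rw [map_verlindeSum, toReal_twoSqrtTwo, map_mul, map_ofNat, map_natCast] at hm_real
  refine ⟨m, ?_⟩
  rw [Smat_eq_sMatrix, one_div_thirtyTwo_mul_sum_div_eq_verlindeSum, hm_real]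
  ring
end

section
/- Fix τ ∈ {1/2, −1/2} and the bicharacter χ^1 on E_2 (χ(g_1,g_1)=χ(g_2,g_2)=−1, χ(g_1,g_2)=1). The set of pairs (q, α), where q is a quadratic form for χ^1 and α^2 = τ·Σ_{g∈E_2} q(g), has exactly 6 equivalence classes under the relation (q,α) ~ (q∘f, α) for f ∈ Aut(E_2) preserving q. -/
/-!
A quadratic form `q` for `χ¹` is determined by `a = q(g₁)` and `b = q(g₂)`, which satisfy
`a² = b² = -1`, and then `∑ q = (1 + a)(1 + b) ∈ {2i, 2, -2i}`. These three sums are distinct, so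
`α` determines the unordered pair `{a, b}`, and the coordinate swap (an automorphism preserving
`χ¹`) identifies `(a, b)` with `(b, a)`. Hence a class is determined by `α` alone, and the classes
correspond to the square roots of the three distinct nonzero numbers `2iτ, 2τ, -2iτ`: six in all.
-/

/-- The bicharacter `χ¹` on `E₂ = (ℤ/2ℤ)²`:
`χ(g₁,g₁) = χ(g₂,g₂) = -1`, `χ(g₁,g₂) = χ(g₂,g₁) = 1`. -/
def chi1 (g h : ZMod 2 × ZMod 2) : ℂ :=
  (-1 : ℂ) ^ (g.1.val * h.1.val + g.2.val * h.2.val)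

/-- Braiding data `(q, α)` for the Tambara–Yamagami category `C(χ¹₂, τ)`:
`q` is a quadratic form for `χ¹` and `α² = τ·Σ_g q(g)`. -/
def TYData (τ : ℝ) : Type :=
  {qa : ((ZMod 2 × ZMod 2) → ℂ) × ℂ //
    (qa.1 0 = 1 ∧ (∀ g, qa.1 g ≠ 0) ∧
      ∀ g h, qa.1 g * qa.1 h = chi1 g h * qa.1 (g + h)) ∧
    qa.2 ^ 2 = (τ : ℂ) * ∑ g : ZMod 2 × ZMod 2, qa.1 g}

/-- `(q,α) ~ (q∘f, α)` for `f ∈ Aut(E₂)` preserving `χ¹`. -/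
def tySetoid (τ : ℝ) : Setoid (TYData τ) where
  r a b := a.1.2 = b.1.2 ∧
    ∃ f : (ZMod 2 × ZMod 2) ≃+ (ZMod 2 × ZMod 2),
      (∀ g h, chi1 (f g) (f h) = chi1 g h) ∧ ∀ g, b.1.1 g = a.1.1 (f g)
  iseqv := by
    constructor
    · intro a
      exact ⟨rfl, AddEquiv.refl _, fun _ _ => rfl, fun _ => rfl⟩
    · rintro a b ⟨hα, f, hχ, hq⟩
      refine ⟨hα.symm, f.symm, fun g h => ?_, fun g => ?_⟩
      · have := hχ (f.symm g) (f.symm h)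
        rw [f.apply_symm_apply, f.apply_symm_apply] at this
        exact this.symm
      · have := hq (f.symm g)
        rw [f.apply_symm_apply] at this
        exact this.symm
    · rintro a b c ⟨hα, f, hχ, hq⟩ ⟨hα', f', hχ', hq'⟩
      refine ⟨hα.trans hα', f'.trans f, fun g h => ?_, fun g => ?_⟩
      · rw [AddEquiv.trans_apply, AddEquiv.trans_apply, hχ, hχ']
      · rw [hq' g, hq (f' g), AddEquiv.trans_apply]


open Complex Finset Polynomial

local notation "E₂" => ZMod 2 × ZMod 2

lemma eq_zero_or_eq_one_of_zmod_two (u : ZMod 2) : u = 0 ∨ u = 1 := by decide +revert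

lemma pow_val_mul_pow_val {a : ℂ} (ha : a ^ 2 = -1) (u v : ZMod 2) :
    a ^ u.val * a ^ v.val = (-1) ^ (u.val * v.val) * a ^ (u + v).val := by
  rcases eq_zero_or_eq_one_of_zmod_two u with rfl | rfl <;>
    rcases eq_zero_or_eq_one_of_zmod_two v with rfl | rfl <;>
    simp [ZMod.val_one, show (1 + 1 : ZMod 2) = 0 from rfl, ← ha, sq]

noncomputable def quadOfGens (a b : ℂ) (g : E₂) : ℂ :=
  a ^ g.1.val * b ^ g.2.val

lemma quadOfGens_mul {a b : ℂ} (ha : a ^ 2 = -1) (hb : b ^ 2 = -1) (g h : E₂) :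
    quadOfGens a b g * quadOfGens a b h = chi1 g h * quadOfGens a b (g + h) := by
  have ha' := pow_val_mul_pow_val ha g.1 h.1
  have hb' := pow_val_mul_pow_val hb g.2 h.2
  simp only [quadOfGens, chi1, Prod.fst_add, Prod.snd_add, pow_add]
  linear_combination (b ^ g.2.val * b ^ h.2.val) * ha' +
    (-1) ^ (g.1.val * h.1.val) * a ^ (g.1 + h.1).val * hb'

lemma quadOfGens_swap (a b : ℂ) (g : E₂) : quadOfGens b a g = quadOfGens a b g.swap :=
  mul_comm _ _

lemma sum_zmod_two {M : Type*} [AddCommMonoid M] (f : ZMod 2 → M) : ∑ u, f u = f 0 + f 1 :=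
  Fin.sum_univ_two f

lemma sum_quadOfGens (a b : ℂ) : ∑ g : E₂, quadOfGens a b g = (1 + a) * (1 + b) := by
  simp only [Fintype.sum_prod_type, sum_zmod_two, quadOfGens]
  simp [ZMod.val_one]
  ring

lemma chi1_swap (g h : E₂) : chi1 g.swap h.swap = chi1 g h := by
  simp only [chi1, Prod.fst_swap, Prod.snd_swap, add_comm]

lemma sq_apply_eq_neg_one {q : E₂ → ℂ} (hq : ∀ g h, q g * q h = chi1 g h * q (g + h))
    (hq0 : q 0 = 1) {g : E₂} (hg : g = (1, 0) ∨ g = (0, 1)) : q g ^ 2 = -1 := by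
  have hgg : g + g = 0 := by rcases hg with rfl | rfl <;> rfl
  have hχ : chi1 g g = -1 := by rcases hg with rfl | rfl <;> simp [chi1, ZMod.val_one]
  rw [sq, hq, hgg, hq0, hχ, mul_one]

lemma eq_quadOfGens {q : E₂ → ℂ} (hq : ∀ g h, q g * q h = chi1 g h * q (g + h))
    (hq0 : q 0 = 1) : q = quadOfGens (q (1, 0)) (q (0, 1)) := by
  have h11 : q (1, 1) = q (1, 0) * q (0, 1) := by
    rw [hq, show chi1 (1, 0) (0, 1) = 1 by simp [chi1, ZMod.val_one], one_mul]; rfl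
  have h00 : q (0, 0) = 1 := hq0
  funext ⟨u, v⟩
  rcases eq_zero_or_eq_one_of_zmod_two u with rfl | rfl <;>
    rcases eq_zero_or_eq_one_of_zmod_two v with rfl | rfl <;>
    simp [quadOfGens, ZMod.val_one, h00, h11]

lemma Complex.card_nthRootsFinset {n : ℕ} (hn : n ≠ 0) {a : ℂ} (ha : a ≠ 0) :
    #(nthRootsFinset n a) = n := by
  have hζ := Complex.isPrimitiveRoot_exp n hn
  classical
  rw [nthRootsFinset_def, Multiset.toFinset_card_of_nodup (hζ.nthRoots_nodup ha),
    hζ.card_nthRoots, if_pos (IsAlgClosed.exists_pow_nat_eq a (Nat.pos_of_ne_zero hn))]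

lemma Complex.sq_eq_neg_one_iff {z : ℂ} : z ^ 2 = -1 ↔ z = I ∨ z = -I := by
  rw [← I_sq, sq_eq_sq_iff_eq_or_eq_neg]

noncomputable def quadSums : Finset ℂ := {2 * I, 2, -(2 * I)}

lemma card_quadSums : #quadSums = 3 := by
  have h1 : 2 * I ≠ 2 := by simp [Complex.ext_iff]
  have h2 : 2 * I ≠ -(2 * I) := by norm_num [Complex.ext_iff]
  have h3 : (2 : ℂ) ≠ -(2 * I) := by norm_num [Complex.ext_iff]
  simp [quadSums, h1, h2, h3]

lemma zero_notMem_quadSums : (0 : ℂ) ∉ quadSums := by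
  simp [quadSums, Complex.ext_iff]

lemma mem_quadSums_iff {s : ℂ} :
    s ∈ quadSums ↔ ∃ a b : ℂ, a ^ 2 = -1 ∧ b ^ 2 = -1 ∧ (1 + a) * (1 + b) = s := by
  simp only [Complex.sq_eq_neg_one_iff]
  constructor
  · simp only [quadSums, mem_insert, mem_singleton]
    rintro (rfl | rfl | rfl)
    · exact ⟨I, I, .inl rfl, .inl rfl, by linear_combination I_sq⟩
    · exact ⟨I, -I, .inl rfl, .inr rfl, by linear_combination -I_sq⟩
    · exact ⟨-I, -I, .inr rfl, .inr rfl, by linear_combination I_sq⟩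
  · rintro ⟨a, b, (rfl | rfl), (rfl | rfl), rfl⟩ <;> norm_num [quadSums, Complex.ext_iff]

lemma eq_or_swap_of_one_add_mul_one_add_eq {a b c d : ℂ} (ha : a = I ∨ a = -I)
    (hb : b = I ∨ b = -I) (hc : c = I ∨ c = -I) (hd : d = I ∨ d = -I)
    (h : (1 + a) * (1 + b) = (1 + c) * (1 + d)) : (c = a ∧ d = b) ∨ (c = b ∧ d = a) := by
  rcases ha with rfl | rfl <;> rcases hb with rfl | rfl <;> rcases hc with rfl | rfl <;>
    rcases hd with rfl | rfl <;> revert h <;> norm_num [Complex.ext_iff]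

namespace TYData

variable {τ : ℝ}

lemma sq_apply_eq_neg_one (x : TYData τ) {g : E₂} (hg : g = (1, 0) ∨ g = (0, 1)) :
    x.1.1 g ^ 2 = -1 :=
  _root_.sq_apply_eq_neg_one x.2.1.2.2 x.2.1.1 hg

lemma apply_eq_quadOfGens (x : TYData τ) (g : E₂) :
    x.1.1 g = quadOfGens (x.1.1 (1, 0)) (x.1.1 (0, 1)) g :=
  congrFun (eq_quadOfGens x.2.1.2.2 x.2.1.1) g

lemma sq_snd (x : TYData τ) :
    x.1.2 ^ 2 = τ * ((1 + x.1.1 (1, 0)) * (1 + x.1.1 (0, 1))) := by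
  rw [x.2.2, ← sum_quadOfGens]
  simp only [← apply_eq_quadOfGens]

noncomputable def ofGens (a b α : ℂ) (ha : a ^ 2 = -1) (hb : b ^ 2 = -1)
    (hα : α ^ 2 = τ * ((1 + a) * (1 + b))) : TYData τ :=
  have hne : ∀ {z : ℂ}, z ^ 2 = -1 → z ≠ 0 := by rintro z hz rfl; norm_num at hz
  ⟨(quadOfGens a b, α),
    ⟨by simp [quadOfGens], fun _ => mul_ne_zero (pow_ne_zero _ (hne ha)) (pow_ne_zero _ (hne hb)),
      quadOfGens_mul ha hb⟩,
    by rw [sum_quadOfGens]; exact hα⟩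

end TYData

lemma tySetoid_r_iff {τ : ℝ} (hτ : τ ≠ 0) {x y : TYData τ} :
    (tySetoid τ).r x y ↔ x.1.2 = y.1.2 := by
  refine ⟨And.left, fun hα => ⟨hα, ?_⟩⟩
  have hsum :
      (1 + x.1.1 (1, 0)) * (1 + x.1.1 (0, 1)) = (1 + y.1.1 (1, 0)) * (1 + y.1.1 (0, 1)) :=
    mul_left_cancel₀ (ofReal_ne_zero.2 hτ) (by rw [← x.sq_snd, ← y.sq_snd, hα])
  have hgen : ∀ z : TYData τ, ∀ g : E₂, g = (1, 0) ∨ g = (0, 1) → z.1.1 g = I ∨ z.1.1 g = -I :=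
    fun z g hg => Complex.sq_eq_neg_one_iff.1 (z.sq_apply_eq_neg_one hg)
  rcases eq_or_swap_of_one_add_mul_one_add_eq (hgen x _ (.inl rfl)) (hgen x _ (.inr rfl))
    (hgen y _ (.inl rfl)) (hgen y _ (.inr rfl)) hsum with ⟨h₁, h₂⟩ | ⟨h₁, h₂⟩
  · refine ⟨AddEquiv.refl _, fun _ _ => rfl, fun g => ?_⟩
    rw [y.apply_eq_quadOfGens, x.apply_eq_quadOfGens, h₁, h₂]
    rfl
  · refine ⟨AddEquiv.prodComm, chi1_swap, fun g => ?_⟩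
    rw [y.apply_eq_quadOfGens, x.apply_eq_quadOfGens, h₁, h₂, quadOfGens_swap]
    rfl

open Classical in
noncomputable def alphaSet (τ : ℝ) : Finset ℂ :=
  quadSums.biUnion fun s => nthRootsFinset 2 ((τ : ℂ) * s)

lemma mem_alphaSet_iff {τ : ℝ} {α : ℂ} : α ∈ alphaSet τ ↔ ∃ x : TYData τ, x.1.2 = α := by
  simp only [alphaSet, mem_biUnion, mem_nthRootsFinset two_pos, mem_quadSums_iff]
  constructor
  · rintro ⟨_, ⟨a, b, ha, hb, rfl⟩, hα⟩
    exact ⟨TYData.ofGens a b α ha hb hα, rfl⟩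
  · rintro ⟨x, rfl⟩
    exact ⟨_, ⟨_, _, x.sq_apply_eq_neg_one (.inl rfl), x.sq_apply_eq_neg_one (.inr rfl), rfl⟩,
      x.sq_snd⟩

lemma card_alphaSet {τ : ℝ} (hτ : τ ≠ 0) : #(alphaSet τ) = 6 := by
  have hτ' : (τ : ℂ) ≠ 0 := ofReal_ne_zero.2 hτ
  classical
  rw [alphaSet, card_biUnion, sum_congr rfl fun s hs => Complex.card_nthRootsFinset two_ne_zero
    (mul_ne_zero hτ' (ne_of_mem_of_not_mem hs zero_notMem_quadSums)), sum_const, card_quadSums]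
  · rfl
  · intro s _ t _ hst
    refine disjoint_left.2 fun α hs ht => hst (mul_left_cancel₀ hτ' ?_)
    rw [mem_nthRootsFinset two_pos] at hs ht
    rw [← hs, ← ht]

noncomputable def quotientEquivAlphaSet {τ : ℝ} (hτ : τ ≠ 0) :
    Quotient (tySetoid τ) ≃ alphaSet τ :=
  Equiv.ofBijective
    (Quotient.lift (fun x => ⟨x.1.2, mem_alphaSet_iff.2 ⟨x, rfl⟩⟩) fun _ _ h => Subtype.ext h.1)
    ⟨by
      rintro ⟨x⟩ ⟨y⟩ h
      exact Quotient.sound ((tySetoid_r_iff hτ).2 (congrArg Subtype.val h)),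
    by
      rintro ⟨α, hα⟩
      obtain ⟨x, rfl⟩ := mem_alphaSet_iff.1 hα
      exact ⟨Quotient.mk _ x, rfl⟩⟩

/-- for `τ = ±1/2`, the pairs `(q, α)` with `q` a quadratic form
for `χ¹` on `E₂` and `α² = τ·Σ_g q(g)` form exactly 6 equivalence classes
under `(q, α) ~ (q∘f, α)` for automorphisms `f` preserving `χ¹`. -/
theorem stmt15 (τ : ℝ) (hτ : τ = 1 / 2 ∨ τ = -(1 / 2)) :
    Nat.card (Quotient (tySetoid τ)) = 6 := by
  have hτ0 : τ ≠ 0 := by rcases hτ with rfl | rfl <;> norm_num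
  rw [Nat.card_congr (quotientEquivAlphaSet hτ0), Nat.card_eq_finsetCard, card_alphaSet hτ0]
end

section
/- Suppose y, y' are basis elements of dimension 2 in a modular datum of total dimension 32 with y' = g⊗y for an invertible g satisfying S_{g,y}/dim(y) = θ_{g⊗y}/θ_g θ_y and θ_g = 1. If the orthogonality relation Σ_z S_{y,z}S_{x,z} = 0 holds where the only nonzero contributions are from the four invertible elements z with S_{x,z} = 2 and S_{y,z} = (θ_{z⊗y}/θ_y)·2, then θ_y = −θ_{y'}. -/
/-! The stabiliser of `y` in `E₂` and its complement both have two elements, and the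
twists are constant on each part, so the orthogonality sum is `(8 / θ_y) (θ_y + θ_{y'})`. -/

open Finset

theorem Finset.sum_comp_eq_card_smul_add_card_smul {ι O M : Type*} [Fintype ι]
    [AddCommMonoid M] (h : ι → O) (φ : O → M) {p q : O} (hpq : ∀ i, h i = p ∨ h i = q)
    [DecidablePred (h · = p)] :
    ∑ i, φ (h i) = #{i | h i = p} • φ p + #{i | h i ≠ p} • φ q := by
  rw [← sum_filter_add_sum_filter_not univ (h · = p)]
  congr 1
  · rw [sum_congr rfl fun i hi => by rw [(mem_filter.mp hi).2], sum_const]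
  · rw [sum_congr rfl fun i hi => by rw [(hpq i).resolve_left (mem_filter.mp hi).2], sum_const]

open scoped Classical in
theorem stmt19_general {O : Type} (ι : ZMod 2 × ZMod 2 → O) (mul : O → O → O)
    (θ : O → ℂ) (S : O → O → ℂ) (x y y' : O)
    (hθy : θ y ≠ 0)
    (horb : ∀ z, mul (ι z) y = y ∨ mul (ι z) y = y')
    (hstab : (Finset.univ.filter
      (fun z : ZMod 2 × ZMod 2 => mul (ι z) y = y)).card = 2)
    (hSy : ∀ z, S y (ι z) = θ (mul (ι z) y) / θ y * 2)
    (hSx : ∀ z, S x (ι z) = 2)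
    (horth : (∑ z : ZMod 2 × ZMod 2, S y (ι z) * S x (ι z)) = 0) :
    θ y = -θ y' := by
  have hmoved : #{z : ZMod 2 × ZMod 2 | mul (ι z) y ≠ y} = 2 := by
    have hsplit := card_filter_add_card_filter_not (s := univ)
      (fun z : ZMod 2 × ZMod 2 => mul (ι z) y = y)
    rw [hstab, card_univ] at hsplit
    simp only [Fintype.card_prod, ZMod.card] at hsplit
    convert (by omega : #{a | ¬mul (ι a) y = y} = 2)
  have horbit_sum : ∑ z : ZMod 2 × ZMod 2, θ (mul (ι z) y) = 2 * θ y + 2 * θ y' := by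
    rw [sum_comp_eq_card_smul_add_card_smul (fun z => mul (ι z) y) θ horb, hstab, hmoved,
      nsmul_eq_mul, nsmul_eq_mul, Nat.cast_ofNat]
  have hbalanced : ∑ z : ZMod 2 × ZMod 2, S y (ι z) * S x (ι z)
      = 4 / θ y * ∑ z : ZMod 2 × ZMod 2, θ (mul (ι z) y) := by
    rw [mul_sum]
    exact sum_congr rfl fun z _ => by rw [hSy, hSx]; ring
  rw [hbalanced, horbit_sum, mul_eq_zero] at horth
  rcases horth with h | h
  · exact absurd h (div_ne_zero (by norm_num) hθy)
  · linear_combination h / 2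

open scoped Classical in
/-- in the modular datum of total dimension 32 from Section 3.1,
with invertibles `ι z` for `z ∈ E₂ = (ℤ/2ℤ)²` of trivial twist, `y, y'` basis
elements of dimension 2 with `y' = g₀⊗y` for an invertible `g₀`, orbit of `y`
under `E₂` equal to `{y, y'}` (each hit by exactly two group elements),
`S_{y,z} = (θ_{z⊗y}/θ_y)·2` for invertible `z` (balancing), `S_{x,z} = 2` for
invertible `z`, `S_{x,y''} = 0` otherwise, and the orthogonality relation
`Σ_z S_{y,z} S_{x,z} = 0` whose only nonzero contributions come from the four
invertibles: then `θ_y = -θ_{y'}`. -/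
theorem stmt19 {O : Type} (ι : ZMod 2 × ZMod 2 → O) (mul : O → O → O)
    (θ : O → ℂ) (dim : O → ℂ) (S : O → O → ℂ) (x y y' : O)
    (hdimy : dim y = 2) (hdimy' : dim y' = 2)
    (hθinv : ∀ z, θ (ι z) = 1) (hθy : θ y ≠ 0)
    (g₀ : ZMod 2 × ZMod 2) (hy' : y' = mul (ι g₀) y) (hne : y ≠ y')
    (horb : ∀ z, mul (ι z) y = y ∨ mul (ι z) y = y')
    (hstab : (Finset.univ.filter
      (fun z : ZMod 2 × ZMod 2 => mul (ι z) y = y)).card = 2)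
    (hSy : ∀ z, S y (ι z) = θ (mul (ι z) y) / θ y * 2)
    (hSx : ∀ z, S x (ι z) = 2)
    (horth : (∑ z : ZMod 2 × ZMod 2, S y (ι z) * S x (ι z)) = 0) :
    θ y = -θ y' :=
  stmt19_general ι mul θ S x y y' hθy horb hstab hSy hSx horth
end
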